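/- arXiv:2410.05013 — 8 statements merged into one kernel-verified Lean document; each statement's English description precedes it below -/
import Mathlib

section
/- For fixed real numbers r_x, r_y, d with d > 0 and κ₀ > 0, the map (s_x, s_y) ↦ (κ_x, κ_y) defined by κ_x = κ₀(r_x−s_x)/√((r_x−s_x)² + (r_y−s_y)² + d²) and κ_y = κ₀(r_y−s_y)/√((r_x−s_x)² + (r_y−s_y)² + d²) has Jacobian determinant with absolute value equal to κ₀² d² / (d² + (r_x−s_x)² + (r_y−s_y)²)². -/
/-!
With `x = r_x - s_x`, `y = r_y - s_y` and `ρ = √(x² + y² + d²)`, the gradient of `κ₀ x / ρ` is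
`(κ₀ / ρ³) (x y ∇y - (y² + d²) ∇x)`, and symmetrically for `κ₀ y / ρ`. The Jacobian determinant is
therefore `κ₀² ((x² + d²)(y² + d²) - x² y²) / ρ⁶ = κ₀² d² ρ² / ρ⁶ = κ₀² d² / ρ⁴`.
-/

open Real

theorem LinearMap.det_prod_eq {R : Type*} [CommRing R] (L : R × R →ₗ[R] R × R) :
    LinearMap.det L = (L (1, 0)).1 * (L (0, 1)).2 - (L (0, 1)).1 * (L (1, 0)).2 := by
  rw [← LinearMap.det_toMatrix (Module.Basis.finTwoProd R), Matrix.det_fin_two]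
  simp [LinearMap.toMatrix_apply]

theorem hasFDerivAt_mul_sub_div_sqrt {E : Type*} [NormedAddCommGroup E] [NormedSpace ℝ E]
    (c a b d : ℝ) (ℓ m : E →L[ℝ] ℝ) (p : E) (hd : d ≠ 0) :
    HasFDerivAt (fun q => c * (a - ℓ q) / √((a - ℓ q) ^ 2 + (b - m q) ^ 2 + d ^ 2))
      ((c / √((a - ℓ p) ^ 2 + (b - m p) ^ 2 + d ^ 2) ^ 3) •
        (((a - ℓ p) * (b - m p)) • m - ((b - m p) ^ 2 + d ^ 2) • ℓ)) p := by
  have hQ : 0 < (a - ℓ p) ^ 2 + (b - m p) ^ 2 + d ^ 2 := by positivity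
  have hu : HasFDerivAt (fun q => a - ℓ q) (-ℓ) p := ℓ.hasFDerivAt.const_sub a
  have hw : HasFDerivAt (fun q => b - m q) (-m) p := m.hasFDerivAt.const_sub b
  have hρ := (((hu.pow 2).fun_add (hw.pow 2)).add_const (d ^ 2)).sqrt hQ.ne'
  have hρinv := (hasDerivAt_inv (sqrt_pos.mpr hQ).ne').comp_hasFDerivAt p hρ
  simp only [div_eq_mul_inv]
  refine ((hu.const_mul c).fun_mul hρinv).congr_fderiv ?_
  ext v
  simp only [one_div, mul_inv_rev, Nat.add_one_sub_one, pow_one, nsmul_eq_mul, Nat.cast_ofNat,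
    smul_neg, smul_add, neg_smul, neg_neg, Function.comp_apply, add_apply, smul_apply, smul_eq_mul,
    neg_apply, sub_apply]
  field_simp
  rw [sq_sqrt hQ.le]
  ring

theorem stmt_0_general (rx ry d κ₀ : ℝ) (hd : 0 < d) (s : ℝ × ℝ) :
    |LinearMap.det ((fderiv ℝ (fun p : ℝ × ℝ =>
        ((κ₀ * (rx - p.1) / Real.sqrt ((rx - p.1)^2 + (ry - p.2)^2 + d^2),
          κ₀ * (ry - p.2) / Real.sqrt ((rx - p.1)^2 + (ry - p.2)^2 + d^2)) : ℝ × ℝ)) s :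
        (ℝ × ℝ) →L[ℝ] (ℝ × ℝ)).toLinearMap)|
      = κ₀^2 * d^2 / (d^2 + (rx - s.1)^2 + (ry - s.2)^2)^2 := by
  have hκx := hasFDerivAt_mul_sub_div_sqrt κ₀ rx ry d (.fst ℝ ℝ ℝ) (.snd ℝ ℝ ℝ) s hd.ne'
  have hκy := hasFDerivAt_mul_sub_div_sqrt κ₀ ry rx d (.snd ℝ ℝ ℝ) (.fst ℝ ℝ ℝ) s hd.ne'
  simp only [ContinuousLinearMap.coe_fst', ContinuousLinearMap.coe_snd'] at hκx hκy
  simp_rw [add_comm ((ry - _) ^ 2)] at hκy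
  rw [(hκx.prodMk hκy).fderiv, LinearMap.det_prod_eq]
  simp only [ContinuousLinearMap.coe_prod, ContinuousLinearMap.toLinearMap_smul,
    ContinuousLinearMap.toLinearMap_sub, ContinuousLinearMap.coe_snd, ContinuousLinearMap.coe_fst,
    LinearMap.prod_apply, LinearMap.coe_smul, Function.prod_apply, Pi.smul_apply,
    LinearMap.sub_apply, LinearMap.smul_apply, LinearMap.snd_apply, LinearMap.fst_apply,
    smul_eq_mul, mul_zero, mul_one, zero_sub, neg_add_rev, sub_zero]
  set x := rx - s.1
  set y := ry - s.2
  have hρ : 0 < √(x ^ 2 + y ^ 2 + d ^ 2) := sqrt_pos.mpr (by positivity)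
  have hρ2 : √(x ^ 2 + y ^ 2 + d ^ 2) ^ 2 = d ^ 2 + x ^ 2 + y ^ 2 := by
    rw [sq_sqrt (by positivity)]; ring
  set ρ := √(x ^ 2 + y ^ 2 + d ^ 2)
  rw [← hρ2, ← abs_of_nonneg (by positivity : 0 ≤ κ₀ ^ 2 * d ^ 2 / (ρ ^ 2) ^ 2)]
  congr 1
  field_simp
  linear_combination (-κ₀ ^ 2 * d ^ 2) * hρ2

/-- The spatial-frequency map has absolute Jacobian determinant
`κ₀² d² / (d² + (r_x−s_x)² + (r_y−s_y)²)²`. -/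
theorem stmt_0 (rx ry d κ₀ : ℝ) (hd : 0 < d) (hκ : 0 < κ₀) (s : ℝ × ℝ) :
    |LinearMap.det ((fderiv ℝ (fun p : ℝ × ℝ =>
        ((κ₀ * (rx - p.1) / Real.sqrt ((rx - p.1)^2 + (ry - p.2)^2 + d^2),
          κ₀ * (ry - p.2) / Real.sqrt ((rx - p.1)^2 + (ry - p.2)^2 + d^2)) : ℝ × ℝ)) s :
        (ℝ × ℝ) →L[ℝ] (ℝ × ℝ)).toLinearMap)|
      = κ₀^2 * d^2 / (d^2 + (rx - s.1)^2 + (ry - s.2)^2)^2 :=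
  stmt_0_general rx ry d κ₀ hd s
end

section
/- For fixed r_x, r_y, d with d > 0 and κ₀ > 0, the map (s_x, s_y) ↦ (κ₀(r_x−s_x)/ρ, κ₀(r_y−s_y)/ρ), where ρ = √((r_x−s_x)² + (r_y−s_y)² + d²), is injective on ℝ². -/
open Real

/-!
Writing `v = r - s`, the map is `v ↦ κ₀ • v / √(‖v‖² + d²)` for the Euclidean norm on `ℝ²`. The norm
of the image, `κ₀ ‖v‖ / √(‖v‖² + d²)`, is an injective function of `‖v‖` because `d ≠ 0`; so two
points with the same image have the same `‖v‖`, hence the same denominator, hence the same `v`.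
-/

lemma injOn_div_sqrt_sq_add {c : ℝ} (hc : 0 < c) :
    Set.InjOn (fun t : ℝ => t / √(t ^ 2 + c)) (Set.Ici 0) := by
  intro t ht s hs h
  have hsq : t ^ 2 / (t ^ 2 + c) = s ^ 2 / (s ^ 2 + c) := by
    have h2 := congrArg (· ^ 2) h
    simp only [div_pow] at h2
    rwa [sq_sqrt (by positivity), sq_sqrt (by positivity)] at h2
  rw [div_eq_div_iff (by positivity) (by positivity)] at hsq
  exact (sq_eq_sq₀ ht hs).1 (mul_right_cancel₀ hc.ne' (by linear_combination hsq))

lemma injective_smul_inv_sqrt_norm_sq_add {E : Type*} [NormedAddCommGroup E] [NormedSpace ℝ E]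
    {c : ℝ} (hc : 0 < c) : Function.Injective fun v : E => (√(‖v‖ ^ 2 + c))⁻¹ • v := by
  intro v w h
  have hnorm : ‖v‖ = ‖w‖ := by
    refine injOn_div_sqrt_sq_add hc (norm_nonneg v) (norm_nonneg w) ?_
    simpa [norm_smul, abs_of_nonneg (sqrt_nonneg _), div_eq_inv_mul] using congrArg norm h
  have hρ : (√(‖v‖ ^ 2 + c))⁻¹ ≠ 0 := inv_ne_zero (sqrt_pos.2 (by positivity)).ne'
  simp only [hnorm] at h hρ
  exact smul_right_injective E hρ h

/-- The spatial-frequency map is injective on ℝ². -/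
theorem stmt_1 (rx ry d κ₀ : ℝ) (hd : 0 < d) (hκ : 0 < κ₀) :
    Function.Injective (fun p : ℝ × ℝ =>
      ((κ₀ * (rx - p.1) / Real.sqrt ((rx - p.1)^2 + (ry - p.2)^2 + d^2),
        κ₀ * (ry - p.2) / Real.sqrt ((rx - p.1)^2 + (ry - p.2)^2 + d^2)) : ℝ × ℝ)) := by
  have hinj : Function.Injective ((κ₀ • ·) ∘ WithLp.ofLp ∘
      (fun v : WithLp 2 (ℝ × ℝ) => (√(‖v‖ ^ 2 + d ^ 2))⁻¹ • v) ∘ WithLp.toLp 2 ∘ ((rx, ry) - ·)) :=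
    (smul_right_injective _ hκ.ne').comp <| (WithLp.ofLp_injective 2).comp <|
      (injective_smul_inv_sqrt_norm_sq_add (pow_pos hd 2)).comp <|
        (WithLp.toLp_injective 2).comp sub_right_injective
  convert hinj using 1
  ext p <;> simp [WithLp.prod_norm_sq_eq_of_L2, sq_abs, div_eq_mul_inv, mul_assoc, mul_comm]
end

section
/- The function d ↦ ∫_{−a}^{a} ∫_{−b}^{b} d²/(d²+x²+y²)² dy dx (with a, b > 0 fixed) is strictly decreasing in d on (0, ∞) and tends to 0 as d → ∞. -/
open Real MeasureTheory Set Filter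

/-!
The substitution `x = d u`, `y = d v` turns the integral over `[-a, a] × [-b, b]` into the
integral of the fixed positive density `1 / (1 + u² + v²)²` over the box
`[-a/d, a/d] × [-b/d, b/d]`. As `d` grows this box strictly shrinks, so the integral strictly
decreases; and since the density is at most `1`, the integral is at most the area `4ab / d²`
of the box, which tends to `0`.
-/

theorem integral_Icc_eq_intervalIntegral {f : ℝ → ℝ} {a b : ℝ} (hab : a ≤ b) :
    ∫ x in Icc a b, f x = ∫ x in a..b, f x := by
  rw [intervalIntegral.integral_of_le hab, integral_Icc_eq_integral_Ioc]

theorem integral_symm_eq_mul_integral_comp_mul {f : ℝ → ℝ} {c : ℝ} (hc : c ≠ 0) (s : ℝ) :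
    ∫ x in -s..s, f x = c * ∫ u in -(s / c)..s / c, f (c * u) := by
  rw [← smul_eq_mul, intervalIntegral.smul_integral_comp_mul_left, mul_neg,
    mul_div_cancel₀ _ hc]

theorem strictMono_integral_symm {f : ℝ → ℝ} (hf : Continuous f) (hpos : ∀ x, 0 < f x) :
    StrictMono (fun s => ∫ x in -s..s, f x) := by
  intro s₁ s₂ hs
  have hi : ∀ a b : ℝ, IntervalIntegrable f volume a b := fun a b => hf.intervalIntegrable a b
  have hsplit : (∫ x in -s₂..s₂, f x) - ∫ x in -s₁..s₁, f x
      = (∫ x in -s₂..-s₁, f x) + ∫ x in s₁..s₂, f x := by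
    rw [intervalIntegral.integral_interval_sub_interval_comm (hi _ _) (hi _ _) (hi _ _),
      intervalIntegral.integral_symm s₁ s₂, sub_neg_eq_add]
  have hleft := intervalIntegral.intervalIntegral_pos_of_pos (hi (-s₂) (-s₁)) hpos (neg_lt_neg hs)
  have hright := intervalIntegral.intervalIntegral_pos_of_pos (hi s₁ s₂) hpos hs
  dsimp only
  linarith

noncomputable def dofDensity (u v : ℝ) : ℝ := 1 / (1 + u ^ 2 + v ^ 2) ^ 2

theorem dofDensity_pos (u v : ℝ) : 0 < dofDensity u v := by
  unfold dofDensity; positivity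

theorem dofDensity_le_one (u v : ℝ) : dofDensity u v ≤ 1 := by
  unfold dofDensity
  rw [div_le_one (by positivity)]
  nlinarith [sq_nonneg u, sq_nonneg v, sq_nonneg (u ^ 2 + v ^ 2)]

theorem continuous_dofDensity : Continuous (Function.uncurry dofDensity) := by
  unfold dofDensity
  exact Continuous.div continuous_const (by fun_prop) fun p => by positivity

noncomputable def dofIntegral (s t : ℝ) : ℝ :=
  ∫ u in -s..s, ∫ v in -t..t, dofDensity u v

theorem dofIntegral_lt_dofIntegral {s₁ s₂ t₁ t₂ : ℝ} (hs₁ : 0 ≤ s₁) (hs : s₁ < s₂)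
    (ht : t₁ ≤ t₂) (ht₂ : 0 < t₂) : dofIntegral s₁ t₁ < dofIntegral s₂ t₂ := by
  have hcont : ∀ t, Continuous fun u => ∫ v in -t..t, dofDensity u v := fun t =>
    intervalIntegral.continuous_parametric_intervalIntegral_of_continuous'
      continuous_dofDensity _ _
  have hinner : ∀ u, (∫ v in -t₁..t₁, dofDensity u v) ≤ ∫ v in -t₂..t₂, dofDensity u v :=
    fun u => (strictMono_integral_symm (continuous_dofDensity.uncurry_left u)
      (dofDensity_pos u)).monotone ht
  calc dofIntegral s₁ t₁ ≤ dofIntegral s₁ t₂ :=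
        intervalIntegral.integral_mono_on (by linarith) ((hcont t₁).intervalIntegrable _ _)
          ((hcont t₂).intervalIntegrable _ _) fun u _ => hinner u
    _ < dofIntegral s₂ t₂ :=
        strictMono_integral_symm (hcont t₂)
          (fun u => intervalIntegral.intervalIntegral_pos_of_pos
            ((continuous_dofDensity.uncurry_left u).intervalIntegrable _ _)
            (dofDensity_pos u) (by linarith)) hs

theorem dofIntegral_nonneg {s t : ℝ} (hs : 0 ≤ s) (ht : 0 ≤ t) : 0 ≤ dofIntegral s t :=
  intervalIntegral.integral_nonneg (by linarith) fun u _ =>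
    intervalIntegral.integral_nonneg (by linarith) fun v _ => (dofDensity_pos u v).le

theorem dofIntegral_le {s t : ℝ} (hs : 0 ≤ s) (ht : 0 ≤ t) : dofIntegral s t ≤ 4 * s * t := by
  have hinner : ∀ u, ‖∫ v in -t..t, dofDensity u v‖ ≤ 1 * |t - -t| := fun u =>
    intervalIntegral.norm_integral_le_of_norm_le_const fun v _ => by
      rw [Real.norm_of_nonneg (dofDensity_pos u v).le]
      exact dofDensity_le_one u v
  have houter := intervalIntegral.norm_integral_le_of_norm_le_const (a := -s) (b := s)
    fun u _ => hinner u
  rw [abs_of_nonneg (by linarith), abs_of_nonneg (by linarith)] at houter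
  calc dofIntegral s t ≤ ‖dofIntegral s t‖ := le_norm_self _
    _ ≤ 4 * s * t := by unfold dofIntegral; linarith

theorem integral_rect_eq_dofIntegral {a b d : ℝ} (ha : 0 ≤ a) (hb : 0 ≤ b) (hd : 0 < d) :
    ∫ x in Icc (-a) a, ∫ y in Icc (-b) b, d ^ 2 / (d ^ 2 + x ^ 2 + y ^ 2) ^ 2
      = dofIntegral (a / d) (b / d) := by
  have hscale : ∀ u v, d ^ 2 / (d ^ 2 + (d * u) ^ 2 + (d * v) ^ 2) ^ 2
      = (d * d)⁻¹ * dofDensity u v := fun u v => by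
    unfold dofDensity
    field_simp
  simp only [integral_Icc_eq_intervalIntegral (neg_le_self ha),
    integral_Icc_eq_intervalIntegral (neg_le_self hb),
    integral_symm_eq_mul_integral_comp_mul (s := b) hd.ne',
    integral_symm_eq_mul_integral_comp_mul (s := a) hd.ne', hscale,
    intervalIntegral.integral_const_mul]
  unfold dofIntegral
  field_simp

/-- The effective-DoF integral is strictly decreasing in the distance d and tends
to 0 as d → ∞. -/
theorem stmt_6 (a b : ℝ) (ha : 0 < a) (hb : 0 < b) :
    StrictAntiOn (fun d : ℝ =>
        ∫ x in Icc (-a) a, ∫ y in Icc (-b) b, d^2 / (d^2 + x^2 + y^2)^2) (Ioi 0) ∧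
    Tendsto (fun d : ℝ =>
        ∫ x in Icc (-a) a, ∫ y in Icc (-b) b, d^2 / (d^2 + x^2 + y^2)^2)
      atTop (nhds 0) := by
  have hrect : ∀ d : ℝ, 0 < d → _ := fun d hd => integral_rect_eq_dofIntegral ha.le hb.le hd
  constructor
  · intro d₁ (hd₁ : 0 < d₁) d₂ (hd₂ : 0 < d₂) hd
    simp only [hrect d₁ hd₁, hrect d₂ hd₂]
    exact dofIntegral_lt_dofIntegral (by positivity) (div_lt_div_of_pos_left ha hd₁ hd)
      (div_le_div_of_nonneg_left hb.le hd₁ hd.le) (by positivity)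
  · have hbound : Tendsto (fun d : ℝ => 4 * (a / d) * (b / d)) atTop (nhds 0) := by
      have hinv : ∀ c : ℝ, Tendsto (fun d : ℝ => c / d) atTop (nhds 0) := fun c =>
        tendsto_const_nhds.div_atTop tendsto_id
      simpa using ((hinv a).const_mul 4).mul (hinv b)
    refine squeeze_zero' ?_ ?_ hbound <;>
      filter_upwards [eventually_gt_atTop 0] with d hd <;>
      rw [hrect d hd]
    · exact dofIntegral_nonneg (by positivity) (by positivity)
    · exact dofIntegral_le (by positivity) (by positivity)
end

section
/- With the geometry of Proposition 2 (user surfaces of side s centered on the z-axis at distances d₁ < d₂, BS surface of height R_y centered at height h₀ ≥ (R_y+s)/2 on the plane z = 0), if 0 ≤ d₂ − d₁ < (2s/(2h₀ − s − R_y))·d₁ then there exists a point p on the BS surface such that the central projection of user 1's surface from p onto user 2's plane has nonempty intersection with user 2's surface. -/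
/-!
Observe from the lowest point `(0, h₀ - R_y/2)` of the BS surface and follow the ray through the
top-centre point `(0, s/2)` of user 1's surface. On user 2's plane it lands on the axis at height
`(d₂ s/2 - (d₂ - d₁)(h₀ - R_y/2)) / d₁`. This is at most `s/2` because `h₀ - R_y/2 ≥ s/2`, and at
least `-s/2` precisely when `(d₂ - d₁)(2h₀ - s - R_y) ≤ 2 s d₁`, which is the distance bound with
the denominator cleared.
-/

open Set

/-- Coordinate at which the ray from coordinate `p` on the plane `z = 0` through coordinate `q` on
the plane `z = d₁` meets the plane `z = d₂`. -/
noncomputable def centralProj (d₁ d₂ p q : ℝ) : ℝ :=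
  (d₂ * q - (d₂ - d₁) * p) / d₁

@[simp]
lemma centralProj_zero_zero (d₁ d₂ : ℝ) : centralProj d₁ d₂ 0 0 = 0 := by
  simp [centralProj]

lemma centralProj_half_mem_Icc {d₁ d₂ a s : ℝ} (hd₁ : 0 < d₁) (hd₁₂ : d₁ ≤ d₂) (ha : s / 2 ≤ a)
    (hΔ : (d₂ - d₁) * (2 * a - s) ≤ 2 * s * d₁) :
    centralProj d₁ d₂ a (s / 2) ∈ Icc (-(s / 2)) (s / 2) := by
  have hΔ₀ : 0 ≤ d₂ - d₁ := sub_nonneg.mpr hd₁₂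
  constructor
  · rw [centralProj, le_div_iff₀ hd₁]
    linarith
  · rw [centralProj, div_le_iff₀ hd₁]
    linarith [mul_le_mul_of_nonneg_left ha hΔ₀]

/-- With the junk value `a / 0 = 0` the hypothesis is contradictory when `c = 0`. -/
lemma mul_lt_of_lt_div_mul {x a b c : ℝ} (hx : 0 ≤ x) (hc : 0 ≤ c) (h : x < a / c * b) :
    x * c < a * b := by
  rcases hc.eq_or_lt with rfl | hc
  · rw [div_zero, zero_mul] at h
    linarith
  · rw [div_mul_eq_mul_div, lt_div_iff₀ hc] at h
    exact h

/-- Converse of the no-blocking condition: if the inter-user distance is below the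
threshold, there is an observation point on the BS surface from which the central
projection of user 1's square onto user 2's plane meets user 2's square. -/
theorem stmt_11 (s d₁ d₂ h₀ Rx Ry : ℝ)
    (hs : 0 < s) (hRx : 0 < Rx) (hRy : 0 < Ry)
    (hd₁ : 0 < d₁) (hd₁₂ : d₁ ≤ d₂)
    (hh₀ : h₀ ≥ (Ry + s) / 2)
    (hΔd : d₂ - d₁ < (2 * s / (2 * h₀ - s - Ry)) * d₁) :
    ∃ p : ℝ × ℝ, p ∈ (Icc (-(Rx/2)) (Rx/2) ×ˢ Icc (h₀ - Ry/2) (h₀ + Ry/2)) ∧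
      (((fun q : ℝ × ℝ =>
            (((d₂ * q.1 - (d₂ - d₁) * p.1) / d₁, (d₂ * q.2 - (d₂ - d₁) * p.2) / d₁) : ℝ × ℝ)) ''
          (Icc (-(s/2)) (s/2) ×ˢ Icc (-(s/2)) (s/2))) ∩
        (Icc (-(s/2)) (s/2) ×ˢ Icc (-(s/2)) (s/2))).Nonempty := by
  have hbound : (d₂ - d₁) * (2 * (h₀ - Ry / 2) - s) ≤ 2 * s * d₁ := by
    have := mul_lt_of_lt_div_mul (sub_nonneg.mpr hd₁₂) (by linarith) hΔd
    linarith
  have hzero_mem : (0 : ℝ) ∈ Icc (-(s / 2)) (s / 2) := ⟨by linarith, by linarith⟩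
  refine ⟨(0, h₀ - Ry / 2), ⟨⟨by linarith, by linarith⟩, le_rfl, by linarith⟩,
    (centralProj d₁ d₂ 0 0, centralProj d₁ d₂ (h₀ - Ry / 2) (s / 2)),
    ⟨(0, s / 2), ⟨hzero_mem, by linarith, le_rfl⟩, rfl⟩, ?_, ?_⟩
  · simpa using hzero_mem
  · exact centralProj_half_mem_Icc hd₁ hd₁₂ (by linarith) hbound
end

section
/- The function G(x,y) = (1/(2d))·[ (x/√(d²+x²))·arctan(y/√(d²+x²)) + (y/√(d²+y²))·arctan(x/√(d²+y²)) ]·d satisfies ∂²G/∂x∂y = d²/(d²+x²+y²)², i.e., G is a double antiderivative of the spatial-bandwidth density. -/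
open Real

lemma inner_deriv_aux (d : ℝ) (hd : 0 < d) (x y : ℝ) :
    deriv (fun y' : ℝ =>
        (1/(2*d)) * ((x / Real.sqrt (d^2 + x^2)) * Real.arctan (y' / Real.sqrt (d^2 + x^2)) +
          (y' / Real.sqrt (d^2 + y'^2)) * Real.arctan (x / Real.sqrt (d^2 + y'^2))) * d) y
      = (1/2) * ( x/(d^2+x^2+y^2)
          + (d^2/(Real.sqrt (d^2+y^2))^3) * Real.arctan (x / Real.sqrt (d^2+y^2))
          - x*y^2/((d^2+y^2)*(d^2+x^2+y^2)) ) := by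
  have hxpos : (0:ℝ) < d^2 + x^2 := by positivity
  have hypos : (0:ℝ) < d^2 + y^2 := by positivity
  have hB : (0:ℝ) < d^2 + x^2 + y^2 := by positivity
  set sx := Real.sqrt (d^2+x^2) with hsxdef
  set sy := Real.sqrt (d^2+y^2) with hsydef
  have hsx : sx^2 = d^2+x^2 := Real.sq_sqrt hxpos.le
  have hsy : sy^2 = d^2+y^2 := Real.sq_sqrt hypos.le
  have hsx0 : (0:ℝ) < sx := Real.sqrt_pos.2 hxpos
  have hsy0 : (0:ℝ) < sy := Real.sqrt_pos.2 hypos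
  have hA : HasDerivAt (fun y' : ℝ => y' / sx) (1 / sx) y := by
    simpa using (hasDerivAt_id y).div_const sx
  have hArc1 : HasDerivAt (fun y' : ℝ => Real.arctan (y'/sx))
      (1/(1+(y/sx)^2) * (1/sx)) y := by
    have := (Real.hasDerivAt_arctan (y/sx)).comp y hA
    exact this
  have hq : HasDerivAt (fun y' : ℝ => d^2 + y'^2) (2*y) y := by
    simpa using (hasDerivAt_pow 2 y).const_add (d^2)
  have hs : HasDerivAt (fun y' : ℝ => Real.sqrt (d^2+y'^2)) (y / sy) y := by
    have h := hq.sqrt (ne_of_gt hypos)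
    rw [← hsydef] at h
    convert h using 1
    ring
  have hBd : HasDerivAt (fun y' : ℝ => y' / Real.sqrt (d^2+y'^2))
      ((1 * sy - y * (y/sy)) / sy^2) y := by
    have := (hasDerivAt_id y).div hs (ne_of_gt (hsydef ▸ hsy0))
    exact this
  have hC : HasDerivAt (fun y' : ℝ => x / Real.sqrt (d^2+y'^2))
      ((0 * sy - x * (y/sy)) / sy^2) y := by
    have := (hasDerivAt_const y x).div hs (ne_of_gt (hsydef ▸ hsy0))
    exact this
  have hArc2 : HasDerivAt (fun y' : ℝ => Real.arctan (x / Real.sqrt (d^2+y'^2)))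
      (1/(1+(x/sy)^2) * ((0*sy - x*(y/sy))/sy^2)) y := by
    have := (Real.hasDerivAt_arctan (x/sy)).comp y hC
    exact this
  have htotal : HasDerivAt (fun y' : ℝ =>
      (1/(2*d)) * ((x / sx) * Real.arctan (y' / sx) +
        (y' / Real.sqrt (d^2 + y'^2)) * Real.arctan (x / Real.sqrt (d^2 + y'^2))) * d)
      ((1/(2*d)) * ((x/sx) * (1/(1+(y/sx)^2) * (1/sx)) +
        (((1*sy - y*(y/sy))/sy^2) * Real.arctan (x/sy)
          + (y/sy) * (1/(1+(x/sy)^2) * ((0*sy - x*(y/sy))/sy^2)))) * d) y := by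
    exact (((hArc1.const_mul (x/sx)).add (hBd.mul hArc2)).const_mul (1/(2*d))).mul_const d
  rw [htotal.deriv]
  have h1 : (1:ℝ)+(y/sx)^2 = (d^2+x^2+y^2)/sx^2 := by
    rw [div_pow, hsx]; field_simp
  have h2 : (1:ℝ)+(x/sy)^2 = (d^2+x^2+y^2)/sy^2 := by
    rw [div_pow, hsy]; field_simp; ring
  have e1 : (x/sx) * (1/(1+(y/sx)^2) * (1/sx)) = x/(d^2+x^2+y^2) := by
    rw [h1]
    field_simp
  have e2 : ((1*sy - y*(y/sy))/sy^2) = d^2/sy^3 := by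
    field_simp
    linear_combination hsy
  have e3 : (y/sy) * (1/(1+(x/sy)^2) * ((0*sy - x*(y/sy))/sy^2))
      = -(x*y^2/((d^2+y^2)*(d^2+x^2+y^2))) := by
    rw [h2]
    field_simp [hypos.ne']
    linear_combination (y^2*x) * hsy
  rw [e1, e2, e3]
  field_simp
  ring

/-- The function `G` is a double antiderivative of the spatial-bandwidth density:
its mixed partial derivative ∂²G/∂x∂y equals `d²/(d²+x²+y²)²`. -/
theorem stmt_13 (d : ℝ) (hd : 0 < d) (x y : ℝ) :
    deriv (fun x' : ℝ => deriv (fun y' : ℝ =>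
        (1/(2*d)) * ((x' / Real.sqrt (d^2 + x'^2)) * Real.arctan (y' / Real.sqrt (d^2 + x'^2)) +
          (y' / Real.sqrt (d^2 + y'^2)) * Real.arctan (x' / Real.sqrt (d^2 + y'^2))) * d) y) x
      = d^2 / (d^2 + x^2 + y^2)^2 := by
  have hrw : (fun x' : ℝ => deriv (fun y' : ℝ =>
        (1/(2*d)) * ((x' / Real.sqrt (d^2 + x'^2)) * Real.arctan (y' / Real.sqrt (d^2 + x'^2)) +
          (y' / Real.sqrt (d^2 + y'^2)) * Real.arctan (x' / Real.sqrt (d^2 + y'^2))) * d) y)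
      = fun x' : ℝ => (1/2) * ( x'/(d^2+x'^2+y^2)
          + (d^2/(Real.sqrt (d^2+y^2))^3) * Real.arctan (x' / Real.sqrt (d^2+y^2))
          - x'*y^2/((d^2+y^2)*(d^2+x'^2+y^2)) ) := by
    funext x'
    exact inner_deriv_aux d hd x' y
  rw [hrw]
  have hypos : (0:ℝ) < d^2+y^2 := by positivity
  have hB : (0:ℝ) < d^2+x^2+y^2 := by positivity
  set sy := Real.sqrt (d^2+y^2) with hsydef
  have hsy : sy^2 = d^2+y^2 := Real.sq_sqrt hypos.le
  have hsy0 : (0:ℝ) < sy := Real.sqrt_pos.2 hypos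
  have hden : HasDerivAt (fun x' : ℝ => d^2 + x'^2 + y^2) (2*x) x := by
    simpa using ((hasDerivAt_pow 2 x).const_add (d^2)).add_const (y^2)
  have u1 : HasDerivAt (fun x' : ℝ => x'/(d^2+x'^2+y^2))
      ((1*(d^2+x^2+y^2) - x*(2*x))/(d^2+x^2+y^2)^2) x :=
    (hasDerivAt_id x).div hden hB.ne'
  have u2 : HasDerivAt (fun x' : ℝ => (d^2/sy^3) * Real.arctan (x'/sy))
      ((1/(1+(x/sy)^2) * (1/sy)) * (d^2/sy^3)) x := by
    have h1 : HasDerivAt (fun x' : ℝ => x'/sy) (1/sy) x := by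
      simpa using (hasDerivAt_id x).div_const sy
    have h := (Real.hasDerivAt_arctan (x/sy)).comp x h1
    simpa [mul_comm] using h.const_mul (d^2/sy^3)
  have u3 : HasDerivAt (fun x' : ℝ => x'*y^2/((d^2+y^2)*(d^2+x'^2+y^2)))
      ((1*y^2*((d^2+y^2)*(d^2+x^2+y^2)) - x*y^2*((d^2+y^2)*(2*x)))/((d^2+y^2)*(d^2+x^2+y^2))^2) x := by
    have hmul : HasDerivAt (fun x' : ℝ => x'*y^2) (1*y^2) x := (hasDerivAt_id x).mul_const _
    exact hmul.div (hden.const_mul (d^2+y^2)) (by positivity)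
  have u : HasDerivAt (fun x' : ℝ => (1/2) * ( x'/(d^2+x'^2+y^2)
          + (d^2/sy^3) * Real.arctan (x'/sy)
          - x'*y^2/((d^2+y^2)*(d^2+x'^2+y^2)) ))
      ((1/2) * ((1*(d^2+x^2+y^2) - x*(2*x))/(d^2+x^2+y^2)^2
        + (1/(1+(x/sy)^2) * (1/sy)) * (d^2/sy^3)
        - (1*y^2*((d^2+y^2)*(d^2+x^2+y^2)) - x*y^2*((d^2+y^2)*(2*x)))/((d^2+y^2)*(d^2+x^2+y^2))^2)) x :=
    ((u1.add u2).sub u3).const_mul (1/2)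
  rw [u.deriv]
  have h2 : (1:ℝ)+(x/sy)^2 = (d^2+x^2+y^2)/sy^2 := by rw [div_pow, hsy]; field_simp; ring
  have e4 : (1/(1+(x/sy)^2) * (1/sy)) * (d^2/sy^3) = d^2/((d^2+y^2)*(d^2+x^2+y^2)) := by
    rw [h2]
    field_simp
    linear_combination (-1:ℝ) * hsy
  rw [e4]
  field_simp
  ring
end

section
/- For fixed a, b, d > 0, the function h₀ ↦ ∫_{−a}^{a} ∫_{h₀−b}^{h₀+b} d²/(d²+x²+y²)² dy dx is strictly decreasing on [0, ∞). -/
open MeasureTheory Set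

/-!
Write the inner integral as `∫_{h-b}^{h+b} g` with `g y = d² / (d² + x² + y²)²`, which is
continuous and strictly decreasing in `|y|`. For `0 ≤ h₁ < h₂`, moving the window
`[h - b, h + b]` from `h₁` to `h₂` trades `g` on `[h₁ - b, h₂ - b]` for `g` on the translate
`[h₁ + b, h₂ + b]`, and there `|t| < t + 2b` pointwise; so every inner integral strictly
decreases, and so does the outer integral of these continuous functions of `x`.
-/

theorem setIntegral_Icc_lt_of_forall_lt {f g : ℝ → ℝ} {a b : ℝ} (hab : a < b)
    (hf : ContinuousOn f (Icc a b)) (hg : ContinuousOn g (Icc a b))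
    (hlt : ∀ x ∈ Icc a b, f x < g x) :
    ∫ x in Icc a b, f x < ∫ x in Icc a b, g x := by
  simp only [integral_Icc_eq_integral_Ioc, ← intervalIntegral.integral_of_le hab.le]
  have ha : a ∈ Icc a b := left_mem_Icc.2 hab.le
  exact intervalIntegral.integral_lt_integral_of_continuousOn_of_le_of_exists_lt hab hf hg
    (fun x hx => (hlt x (Ioc_subset_Icc_self hx)).le) ⟨a, ha, hlt a ha⟩

theorem strictAntiOn_intervalIntegral_window {g : ℝ → ℝ} (hg : Continuous g)
    (hg_abs : ∀ s t, |s| < |t| → g t < g s) {b : ℝ} (hb : 0 < b) :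
    StrictAntiOn (fun h => ∫ y in (h - b)..(h + b), g y) (Ici 0) := by
  intro h₁ hh₁ h₂ _ h12
  have hg' : Continuous fun t => g (t + 2 * b) := hg.comp (continuous_add_const _)
  have hi : ∀ u v, IntervalIntegrable g volume u v := hg.intervalIntegrable
  have shift : ∫ y in (h₁ + b)..(h₂ + b), g y = ∫ t in (h₁ - b)..(h₂ - b), g (t + 2 * b) := by
    rw [intervalIntegral.integral_comp_add_right]
    ring_nf
  rw [← sub_pos, intervalIntegral.integral_interval_sub_interval_comm (hi _ _) (hi _ _) (hi _ _),
    shift, ← intervalIntegral.integral_sub (hi _ _) (hg'.intervalIntegrable _ _)]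
  refine intervalIntegral.intervalIntegral_pos_of_pos_on ((hg.sub hg').intervalIntegrable _ _)
    (fun t ht => ?_) (by linarith)
  have hht : -b < t := by linarith [ht.1, mem_Ici.1 hh₁]
  have habs : |t| < |t + 2 * b| := by
    rw [abs_of_pos (by linarith : 0 < t + 2 * b), abs_lt]
    constructor <;> linarith
  exact sub_pos.2 (hg_abs _ _ habs)

theorem div_sq_add_sq_lt_of_abs_lt {d : ℝ} (hd : d ≠ 0) (x : ℝ) {s t : ℝ} (hst : |s| < |t|) :
    d ^ 2 / (d ^ 2 + x ^ 2 + t ^ 2) ^ 2 < d ^ 2 / (d ^ 2 + x ^ 2 + s ^ 2) ^ 2 := by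
  have hst2 : s ^ 2 < t ^ 2 := sq_lt_sq.2 hst
  gcongr

theorem continuous_div_sq_add_sq {d : ℝ} (hd : d ≠ 0) :
    Continuous fun p : ℝ × ℝ => d ^ 2 / (d ^ 2 + p.1 ^ 2 + p.2 ^ 2) ^ 2 :=
  continuous_const.div (by fun_prop) fun p => by positivity

/-- The single-user effective-DoF integral is strictly decreasing in the height
offset h₀ on [0, ∞). -/
theorem stmt_14 (a b d : ℝ) (ha : 0 < a) (hb : 0 < b) (hd : 0 < d) :
    StrictAntiOn (fun h₀ : ℝ =>
        ∫ x in Icc (-a) a, ∫ y in Icc (h₀ - b) (h₀ + b), d^2 / (d^2 + x^2 + y^2)^2)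
      (Ici 0) := by
  have hker := continuous_div_sq_add_sq hd.ne'
  have inner (h x : ℝ) : ∫ y in Icc (h - b) (h + b), d ^ 2 / (d ^ 2 + x ^ 2 + y ^ 2) ^ 2
      = ∫ y in (h - b)..(h + b), d ^ 2 / (d ^ 2 + x ^ 2 + y ^ 2) ^ 2 := by
    rw [integral_Icc_eq_integral_Ioc, intervalIntegral.integral_of_le (by linarith)]
  have hcont (h : ℝ) :
      Continuous fun x => ∫ y in (h - b)..(h + b), d ^ 2 / (d ^ 2 + x ^ 2 + y ^ 2) ^ 2 :=
    intervalIntegral.continuous_parametric_intervalIntegral_of_continuous' hker _ _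
  intro h₁ hh₁ h₂ hh₂ h12
  simp only [inner]
  exact setIntegral_Icc_lt_of_forall_lt (by linarith) (hcont h₂).continuousOn
    (hcont h₁).continuousOn fun x _ =>
      strictAntiOn_intervalIntegral_window (hker.comp (Continuous.prodMk_right x))
        (fun _ _ => div_sq_add_sq_lt_of_abs_lt hd.ne' x) hb hh₁ hh₂ h12
end

section
/- Let 0 < d₁ < d₂ and s, h₀, R_y > 0 with h₀ ≥ (R_y + s)/2. Define Δd = d₂ − d₁. For an observation point with coordinates (r_x, r_y) in the BS frame (user surfaces centered at height −h relative to the BS center), the blocked region S_blocked(r) ⊆ [−s/2, s/2]² given by Eq. (18) is empty (measure zero) whenever r_y > −h₀ + (s/2)·(d₂+d₁)/(d₂−d₁) or |r_x| > (s/2)·(d₂+d₁)/(d₂−d₁). -/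
open Set

/-! A point `p` of user 2's square is blocked only if `d₁ p = d₂ q - (d₂ - d₁) c` for some `q` in
user 1's square, where `c` is the matching coordinate of the observation point. Both `p` and `q`
have absolute value at most `s/2`, so the triangle inequality gives
`(d₂ - d₁) |c| ≤ (s/2)(d₂ + d₁)`, separately in each coordinate. -/

lemma abs_sub_mul_le_of_mem_Icc {a d₁ d₂ p q : ℝ} (hd₁ : 0 ≤ d₁) (hd₂ : 0 ≤ d₂)
    (hp : p ∈ Icc (-a) a) (hq : q ∈ Icc (-a) a) :
    |d₂ * q - d₁ * p| ≤ a * (d₂ + d₁) := by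
  have hp' : |p| ≤ a := abs_le.mpr hp
  have hq' : |q| ≤ a := abs_le.mpr hq
  calc |d₂ * q - d₁ * p| ≤ |d₂ * q| + |d₁ * p| := abs_sub _ _
    _ = d₂ * |q| + d₁ * |p| := by rw [abs_mul, abs_mul, abs_of_nonneg hd₁, abs_of_nonneg hd₂]
    _ ≤ d₂ * a + d₁ * a := by gcongr
    _ = a * (d₂ + d₁) := by ring

lemma abs_le_of_mem_Icc_of_div_mem_Icc {a d₁ d₂ c q : ℝ} (hd₁ : 0 < d₁) (hd₁₂ : d₁ < d₂)
    (hq : q ∈ Icc (-a) a) (hp : (d₂ * q - (d₂ - d₁) * c) / d₁ ∈ Icc (-a) a) :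
    |c| ≤ a * (d₂ + d₁) / (d₂ - d₁) := by
  have hΔ : 0 < d₂ - d₁ := sub_pos.mpr hd₁₂
  have hc : (d₂ - d₁) * c = d₂ * q - d₁ * ((d₂ * q - (d₂ - d₁) * c) / d₁) := by
    field_simp
    ring
  have key := abs_sub_mul_le_of_mem_Icc hd₁.le (hd₁.trans hd₁₂).le hp hq
  rw [← hc, abs_mul, abs_of_pos hΔ] at key
  rw [le_div_iff₀ hΔ, mul_comm]
  exact key

theorem stmt_17_general (s d₁ d₂ h₀ rx ry : ℝ)
    (hd₁ : 0 < d₁) (hd₁₂ : d₁ < d₂)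
    (hout : ry > -h₀ + (s/2) * (d₂ + d₁) / (d₂ - d₁) ∨
            |rx| > (s/2) * (d₂ + d₁) / (d₂ - d₁)) :
    (Icc (-(s/2)) (s/2) ×ˢ Icc (-(s/2)) (s/2)) ∩
      ((fun q : ℝ × ℝ =>
          (((d₂ * q.1 - (d₂ - d₁) * rx) / d₁,
            (d₂ * q.2 - (d₂ - d₁) * (ry + h₀)) / d₁) : ℝ × ℝ)) ''
        (Icc (-(s/2)) (s/2) ×ˢ Icc (-(s/2)) (s/2))) = ∅ := by
  rw [eq_empty_iff_forall_notMem]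
  rintro _ ⟨⟨hpx, hpy⟩, q, ⟨hqx, hqy⟩, rfl⟩
  have hx := abs_le_of_mem_Icc_of_div_mem_Icc hd₁ hd₁₂ hqx hpx
  have hy := abs_le_of_mem_Icc_of_div_mem_Icc hd₁ hd₁₂ hqy hpy
  rcases hout with hry | hrx
  · linarith [le_abs_self (ry + h₀)]
  · linarith

/-- The blocked region (Eq. (18)): the portion of user 2's square covered by the
central projection of user 1's square from the observation point
`(r_x, r_y + h₀)` (BS-centered coordinates) is empty whenever
`r_y > −h₀ + (s/2)(d₂+d₁)/(d₂−d₁)` or `|r_x| > (s/2)(d₂+d₁)/(d₂−d₁)`. -/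
theorem stmt_17 (s d₁ d₂ h₀ Ry rx ry : ℝ)
    (hs : 0 < s) (hRy : 0 < Ry) (hh₀ : h₀ ≥ (Ry + s) / 2)
    (hd₁ : 0 < d₁) (hd₁₂ : d₁ < d₂)
    (hout : ry > -h₀ + (s/2) * (d₂ + d₁) / (d₂ - d₁) ∨
            |rx| > (s/2) * (d₂ + d₁) / (d₂ - d₁)) :
    (Icc (-(s/2)) (s/2) ×ˢ Icc (-(s/2)) (s/2)) ∩
      ((fun q : ℝ × ℝ =>
          (((d₂ * q.1 - (d₂ - d₁) * rx) / d₁,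
            (d₂ * q.2 - (d₂ - d₁) * (ry + h₀)) / d₁) : ℝ × ℝ)) ''
        (Icc (-(s/2)) (s/2) ×ˢ Icc (-(s/2)) (s/2))) = ∅ :=
  stmt_17_general s d₁ d₂ h₀ rx ry hd₁ hd₁₂ hout
end

section
/- For 0 < d₁ ≤ d₂, a, b > 0 fixed, ∫_{−a}^{a}∫_{−b}^{b} d₁²/(d₁²+x²+y²)² dy dx ≥ ∫_{−a}^{a}∫_{−b}^{b} d₂²/(d₂²+x²+y²)² dy dx, i.e., the closer user has at least as many effective DoF as the farther user (for centered surfaces). -/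
/-!
Substituting `x = d u`, `y = d w` turns the integral for distance `d` into the integral of
the fixed positive kernel `1 / (1 + u² + w²)²` over the rectangle `[-a/d, a/d] × [-b/d, b/d]`.
This rectangle shrinks as `d` grows, so the integral decreases.
-/

open Real MeasureTheory Set

lemma setIntegral_Icc_eq_intervalIntegral {E : Type*} [NormedAddCommGroup E] [NormedSpace ℝ E]
    {f : ℝ → E} {p q : ℝ} (h : p ≤ q) :
    ∫ x in Icc p q, f x = ∫ x in p..q, f x := by
  rw [intervalIntegral.integral_of_le h, integral_Icc_eq_integral_Ioc]

lemma intervalIntegral_intervalIntegral_comp_div (f : ℝ → ℝ → ℝ) {c : ℝ} (hc : c ≠ 0)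
    (p q r s : ℝ) :
    ∫ x in p..q, ∫ y in r..s, f (x / c) (y / c)
      = c ^ 2 * ∫ u in p / c..q / c, ∫ w in r / c..s / c, f u w := by
  simp only [intervalIntegral.integral_comp_div (f _) hc, smul_eq_mul,
    intervalIntegral.integral_const_mul,
    intervalIntegral.integral_comp_div (fun u => ∫ w in r / c..s / c, f u w) hc]
  ring

lemma intervalIntegral_intervalIntegral_mono_interval {φ : ℝ → ℝ → ℝ}
    (hφ : Continuous (Function.uncurry φ)) (hφ_nonneg : ∀ u w, 0 ≤ φ u w)
    {p q p' q' r s r' s' : ℝ} (hpq : p ≤ q) (hp : p' ≤ p) (hq : q ≤ q')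
    (hrs : r ≤ s) (hr : r' ≤ r) (hs : s ≤ s') :
    ∫ u in p..q, ∫ w in r..s, φ u w ≤ ∫ u in p'..q', ∫ w in r'..s', φ u w := by
  have hcont (c e : ℝ) : Continuous fun u => ∫ w in c..e, φ u w :=
    intervalIntegral.continuous_parametric_intervalIntegral_of_continuous' hφ c e
  calc ∫ u in p..q, ∫ w in r..s, φ u w
      ≤ ∫ u in p..q, ∫ w in r'..s', φ u w := by
        refine intervalIntegral.integral_mono_on hpq ((hcont _ _).intervalIntegrable _ _)
          ((hcont _ _).intervalIntegrable _ _) fun u _ => ?_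
        exact intervalIntegral.integral_mono_interval hr hrs hs
          (.of_forall (hφ_nonneg u))
          ((hφ.comp (Continuous.prodMk_right u)).intervalIntegrable _ _)
    _ ≤ ∫ u in p'..q', ∫ w in r'..s', φ u w :=
        intervalIntegral.integral_mono_interval hp hpq hq
          (.of_forall fun u => intervalIntegral.integral_nonneg (by linarith)
            fun w _ => hφ_nonneg u w)
          ((hcont _ _).intervalIntegrable _ _)

lemma sq_div_sq_add_sq_add_sq_sq_eq_div {d : ℝ} (hd : d ≠ 0) (x y : ℝ) :
    d ^ 2 / (d ^ 2 + x ^ 2 + y ^ 2) ^ 2 = (1 / (1 + (x / d) ^ 2 + (y / d) ^ 2) ^ 2) / d ^ 2 := by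
  field_simp

lemma integral_dof_eq_integral_scaled_rect (a b : ℝ) {d : ℝ} (hd : d ≠ 0) :
    ∫ x in -a..a, ∫ y in -b..b, d ^ 2 / (d ^ 2 + x ^ 2 + y ^ 2) ^ 2
      = ∫ u in -(a / d)..a / d, ∫ w in -(b / d)..b / d, 1 / (1 + u ^ 2 + w ^ 2) ^ 2 := by
  simp only [sq_div_sq_add_sq_add_sq_sq_eq_div hd, intervalIntegral.integral_div,
    intervalIntegral_intervalIntegral_comp_div (fun u w => 1 / (1 + u ^ 2 + w ^ 2) ^ 2) hd,
    neg_div]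
  field_simp

/-- The closer user has at least as many effective DoF as the farther user. -/
theorem stmt_19 (a b d₁ d₂ : ℝ) (ha : 0 < a) (hb : 0 < b)
    (hd₁ : 0 < d₁) (hd : d₁ ≤ d₂) :
    (∫ x in Icc (-a) a, ∫ y in Icc (-b) b, d₂^2 / (d₂^2 + x^2 + y^2)^2)
      ≤ ∫ x in Icc (-a) a, ∫ y in Icc (-b) b, d₁^2 / (d₁^2 + x^2 + y^2)^2 := by
  have hd₂ : 0 < d₂ := hd₁.trans_le hd
  simp only [setIntegral_Icc_eq_intervalIntegral (neg_le_self hb.le),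
    setIntegral_Icc_eq_intervalIntegral (neg_le_self ha.le),
    integral_dof_eq_integral_scaled_rect a b hd₁.ne', integral_dof_eq_integral_scaled_rect a b hd₂.ne']
  have hkernel : Continuous (Function.uncurry fun u w : ℝ => 1 / (1 + u ^ 2 + w ^ 2) ^ 2) :=
    continuous_const.div (by fun_prop) fun _ => by positivity
  have ha' : a / d₂ ≤ a / d₁ := div_le_div_of_nonneg_left ha.le hd₁ hd
  have hb' : b / d₂ ≤ b / d₁ := div_le_div_of_nonneg_left hb.le hd₁ hd
  have ha₂ : 0 ≤ a / d₂ := by positivity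
  have hb₂ : 0 ≤ b / d₂ := by positivity
  exact intervalIntegral_intervalIntegral_mono_interval hkernel (fun _ _ => by positivity)
    (by linarith) (neg_le_neg ha') ha' (by linarith) (neg_le_neg hb') hb'
end
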